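/- Let T(x) = Σ_{n=0}^∞ 2^{−n}‖2^n x‖ be the Takagi function, where ‖t‖ = dist(t, ℤ). If x is a dyadic rational, then the right derivative of T at x is +∞ and the left derivative of T at x is −∞. -/

import Mathlib

/-!
Let `x = k / 2^m`. Then `2^n x` is an integer for `n ≥ m`, so those summands of `T x` vanish,
while for `m ≤ n < N` and `|h| ≤ 2^{-N}` the summand of `T (x + h)` is exactly
`2^{-n} ‖2^n h‖ = |h|`. The first `m` summands, being `1`-Lipschitz, change by at most `|h|`
each, and the remaining ones are nonnegative. Hence `T (x + h) - T x ≥ (N - 2m) |h|`, so the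
difference quotients are `≥ N - 2m` to the right of `x` and `≤ 2m - N` to the left, with `N`
arbitrary.
-/

open Filter

/-- The Takagi function `T x = Σ_{n=0}^∞ 2^{−n}‖2^n x‖`, where `‖t‖ = dist(t, ℤ)`. -/
noncomputable def takagi (x : ℝ) : ℝ :=
  ∑' n : ℕ, (2 : ℝ)⁻¹ ^ n * |(2 : ℝ) ^ n * x - round ((2 : ℝ) ^ n * x)|

namespace UnitAddCircle

lemma norm_coe_le_norm_coe_add_abs_sub (a b : ℝ) :
    ‖(a : UnitAddCircle)‖ ≤ ‖(b : UnitAddCircle)‖ + |a - b| := by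
  have := norm_le_norm_add_norm_sub' (a : UnitAddCircle) b
  rw [← AddCircle.coe_sub] at this
  exact this.trans (add_le_add_right QuotientAddGroup.norm_mk_le_norm _)

lemma norm_le_half (u : UnitAddCircle) : ‖u‖ ≤ 1 / 2 := by
  simpa using AddCircle.norm_le_half_period 1 one_ne_zero (x := u)

lemma norm_coe_eq_abs {t : ℝ} (ht : |t| ≤ 1 / 2) : ‖(t : UnitAddCircle)‖ = |t| :=
  (AddCircle.norm_coe_eq_abs_iff 1 one_ne_zero).2 (by simpa using ht)

lemma coe_intCast (k : ℤ) : ((k : ℝ) : UnitAddCircle) = 0 :=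
  (AddCircle.coe_eq_zero_iff 1).2 ⟨k, by simp⟩

end UnitAddCircle

-- The norm on `UnitAddCircle` is the distance to the nearest integer.
noncomputable def takagiTerm (n : ℕ) (x : ℝ) : ℝ :=
  (2 : ℝ)⁻¹ ^ n * ‖((2 ^ n * x : ℝ) : UnitAddCircle)‖

lemma takagi_eq_tsum_takagiTerm (x : ℝ) : takagi x = ∑' n, takagiTerm n x := by
  simp [takagi, takagiTerm, UnitAddCircle.norm_eq]

lemma takagiTerm_nonneg (n : ℕ) (x : ℝ) : 0 ≤ takagiTerm n x := by
  unfold takagiTerm; positivity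

lemma summable_takagiTerm (x : ℝ) : Summable (takagiTerm · x) := by
  refine .of_nonneg_of_le (takagiTerm_nonneg · x) (fun n => ?_)
    (summable_geometric_of_lt_one (by norm_num : (0 : ℝ) ≤ 2⁻¹) (by norm_num))
  have := UnitAddCircle.norm_le_half ((2 ^ n * x : ℝ) : UnitAddCircle)
  unfold takagiTerm
  nlinarith [pow_pos (by norm_num : (0 : ℝ) < 2⁻¹) n]

lemma neg_abs_le_takagiTerm_sub (n : ℕ) (x y : ℝ) :
    -|y - x| ≤ takagiTerm n y - takagiTerm n x := by
  have hlip := UnitAddCircle.norm_coe_le_norm_coe_add_abs_sub (2 ^ n * x) (2 ^ n * y)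
  rw [← mul_sub, abs_mul, abs_of_pos (by positivity), abs_sub_comm] at hlip
  have hscaled := mul_le_mul_of_nonneg_left hlip (by positivity : (0 : ℝ) ≤ 2⁻¹ ^ n)
  rw [mul_add, ← mul_assoc, ← mul_pow, inv_mul_cancel₀ two_ne_zero, one_pow, one_mul]
    at hscaled
  unfold takagiTerm
  linarith

lemma takagiTerm_of_coe_eq_zero {n : ℕ} {x : ℝ} (hx : ((2 ^ n * x : ℝ) : UnitAddCircle) = 0) :
    takagiTerm n x = 0 := by
  simp [takagiTerm, hx]

lemma takagiTerm_eq_abs_sub {n : ℕ} {x y : ℝ}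
    (hx : ((2 ^ n * x : ℝ) : UnitAddCircle) = 0) (hy : 2 ^ (n + 1) * |y - x| ≤ 1) :
    takagiTerm n y = |y - x| := by
  have hsmall : |2 ^ n * (y - x)| ≤ 1 / 2 := by
    rw [abs_mul, abs_of_pos (by positivity)]; rw [pow_succ] at hy; linarith
  rw [takagiTerm, show 2 ^ n * y = 2 ^ n * x + 2 ^ n * (y - x) by ring, AddCircle.coe_add, hx,
    zero_add, UnitAddCircle.norm_coe_eq_abs hsmall, abs_mul, abs_of_pos (by positivity),
    ← mul_assoc, ← mul_pow, inv_mul_cancel₀ two_ne_zero, one_pow, one_mul]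

lemma coe_two_pow_mul_eq_zero {m n : ℕ} {x : ℝ} (hmn : m ≤ n)
    (hx : ((2 ^ m * x : ℝ) : UnitAddCircle) = 0) : ((2 ^ n * x : ℝ) : UnitAddCircle) = 0 := by
  obtain ⟨i, rfl⟩ := Nat.exists_eq_add_of_le hmn
  rw [show (2 : ℝ) ^ (m + i) * x = (2 ^ i : ℕ) • (2 ^ m * x) by
      rw [nsmul_eq_mul]; push_cast; ring,
    AddCircle.coe_nsmul, hx, smul_zero]

lemma sub_mul_abs_le_takagi_sub {m j : ℕ} {x y : ℝ}
    (hx : ((2 ^ m * x : ℝ) : UnitAddCircle) = 0)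
    (hy : |y - x| ≤ 2⁻¹ ^ (m + j)) :
    ((j : ℝ) - m) * |y - x| ≤ takagi y - takagi x := by
  set d := fun n => takagiTerm n y - takagiTerm n x
  have hsum : HasSum d (takagi y - takagi x) := by
    rw [takagi_eq_tsum_takagiTerm, takagi_eq_tsum_takagiTerm]
    exact (summable_takagiTerm y).hasSum.sub (summable_takagiTerm x).hasSum
  have hmid : ∀ n, m ≤ n → n < m + j → d n = |y - x| := fun n hmn hnj => by
    have hxn := coe_two_pow_mul_eq_zero hmn hx
    have hy' : 2 ^ (n + 1) * |y - x| ≤ 1 := calc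
      2 ^ (n + 1) * |y - x| ≤ 2 ^ (m + j) * 2⁻¹ ^ (m + j) :=
        mul_le_mul (pow_le_pow_right₀ one_le_two hnj) hy (abs_nonneg _) (by positivity)
      _ = 1 := by rw [← mul_pow, mul_inv_cancel₀ two_ne_zero, one_pow]
    simp only [d, takagiTerm_eq_abs_sub hxn hy', takagiTerm_of_coe_eq_zero hxn, sub_zero]
  have htail : ∀ n, m ≤ n → 0 ≤ d n := fun n hmn => by
    simp only [d, takagiTerm_of_coe_eq_zero (coe_two_pow_mul_eq_zero hmn hx), sub_zero,
      takagiTerm_nonneg]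
  calc ((j : ℝ) - m) * |y - x|
        = ∑ _ ∈ Finset.range m, -|y - x| + ∑ _ ∈ Finset.range j, |y - x| := by
        simp only [Finset.sum_neg_distrib, Finset.sum_const, Finset.card_range, nsmul_eq_mul]
        ring
    _ ≤ ∑ n ∈ Finset.range m, d n + ∑ i ∈ Finset.range j, d (m + i) := by
        gcongr with n _ i hi
        · exact neg_abs_le_takagiTerm_sub n x y
        · exact (hmid _ (by omega) (by rw [Finset.mem_range] at hi; omega)).ge
    _ = ∑ n ∈ Finset.range (m + j), d n := (Finset.sum_range_add ..).symm
    _ ≤ takagi y - takagi x :=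
        sum_le_hasSum _ (fun n hn => htail n (by rw [Finset.mem_range] at hn; omega)) hsum

lemma le_slope_takagi {m j : ℕ} {x y : ℝ} (hx : ((2 ^ m * x : ℝ) : UnitAddCircle) = 0)
    (hxy : x < y) (hy : y ≤ x + 2⁻¹ ^ (m + j)) :
    (j : ℝ) - m ≤ (takagi y - takagi x) / (y - x) := by
  have hpos : 0 < y - x := sub_pos.2 hxy
  have hT := sub_mul_abs_le_takagi_sub (j := j) hx (by rw [abs_of_pos hpos]; linarith)
  rw [abs_of_pos hpos] at hT
  rwa [le_div_iff₀ hpos]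

lemma slope_takagi_le {m j : ℕ} {x y : ℝ} (hx : ((2 ^ m * x : ℝ) : UnitAddCircle) = 0)
    (hyx : y < x) (hy : x - 2⁻¹ ^ (m + j) ≤ y) :
    (takagi y - takagi x) / (y - x) ≤ (m : ℝ) - j := by
  have hneg : y - x < 0 := sub_neg.2 hyx
  have hT := sub_mul_abs_le_takagi_sub (j := j) hx (by rw [abs_of_neg hneg]; linarith)
  rw [abs_of_neg hneg] at hT
  rw [div_le_iff_of_neg hneg]
  linarith

/-- If `x` is a dyadic rational, then the right derivative of the Takagi function at `x`
is `+∞` and the left derivative is `−∞`. -/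
theorem stmt_19 (x : ℝ) (hx : ∃ (k : ℤ) (m : ℕ), x = (k : ℝ) / 2 ^ m) :
    Tendsto (fun y => (takagi y - takagi x) / (y - x)) (nhdsWithin x (Set.Ioi x)) atTop ∧
    Tendsto (fun y => (takagi y - takagi x) / (y - x)) (nhdsWithin x (Set.Iio x)) atBot := by
  obtain ⟨k, m, rfl⟩ := hx
  have hx : (((2 : ℝ) ^ m * (k / 2 ^ m) : ℝ) : UnitAddCircle) = 0 := by
    rw [mul_div_cancel₀ _ (by positivity)]
    exact UnitAddCircle.coe_intCast k
  have hδ (j : ℕ) : (0 : ℝ) < 2⁻¹ ^ (m + j) := by positivity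
  constructor
  · refine tendsto_atTop.2 fun C => ?_
    obtain ⟨j, hj⟩ := exists_nat_ge (C + m)
    filter_upwards [Ioc_mem_nhdsGT (lt_add_of_pos_right _ (hδ j))] with y hy
    linarith [le_slope_takagi hx hy.1 hy.2]
  · refine tendsto_atBot.2 fun C => ?_
    obtain ⟨j, hj⟩ := exists_nat_ge (m - C)
    filter_upwards [Ico_mem_nhdsLT (sub_lt_self _ (hδ j))] with y hy
    linarith [slope_takagi_le hx hy.2 hy.1]
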